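/- For every c ∈ ℝ and every y, y' ∈ ℝ^N: sup_{u ∈ [0,1]^N} Σ_{a ∈ A} w_u(a)·1{t(a, y) ≥ c} = sup_{u ∈ [0,1]^N} Σ_{a ∈ A} w_u(a)·1{t(a, y') ≥ c}, and this supremum is attained at some u ∈ [0,1]^N. (That is, the worst-case tail probability of the stratified rank score statistic under the sensitivity model with bias at most Γ does not depend on the outcome vector used to compute ranks, and the worst case is achieved.) -/

import Mathlib

open Finset

/-- 'First'-method rank: ties are broken by index. -/
noncomputable def rankF {m : ℕ} (v : Fin m → ℝ) (i : Fin m) : ℕ :=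
  (Finset.univ.filter fun j => v j < v i ∨ (v j = v i ∧ j ≤ i)).card

/-!
Within a matched set the 'first'-method ranks are a permutation of `1, …, n_s`, whatever the
outcomes, so the rank scores computed from `y'` are those computed from `y`, relabelled within
each matched set. Relabelling the units of every matched set, and `u` along with them, preserves
the assignments with one treated unit per set, the sensitivity weights and the statistic. Hence
changing the outcomes only reparametrizes the cube `[0,1]^N`, and both sides range over the same
set of tail probabilities. The tail probability is continuous in `u` and the cube is compact, so
the supremum is attained.
-/

open Function

theorem Finset.card_filter_le_injective {α β : Type*} [Fintype α] [LinearOrder β] {f : α → β}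
    (hf : Injective f) : Injective fun a => #{b | f b ≤ f a} := by
  intro a a' h
  wlog hle : f a ≤ f a' generalizing a a'
  · exact (this h.symm (le_of_not_ge hle)).symm
  have hsub : ({b | f b ≤ f a} : Finset α) ⊆ ({b | f b ≤ f a'} : Finset α) :=
    monotone_filter_right _ fun _ _ hb => hb.trans hle
  have hmem : a' ∈ ({b | f b ≤ f a} : Finset α) := by
    rw [eq_of_subset_of_card_le hsub h.ge]; simp
  exact hf (hle.antisymm (by simpa using hmem))

theorem Equiv.Perm.exists_comp_eq_of_range_eq {α β : Type*} {f g : α → β} (hf : Injective f)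
    (hg : Injective g) (h : Set.range f = Set.range g) : ∃ σ : Equiv.Perm α, ∀ a, g (σ a) = f a :=
  ⟨(Equiv.ofInjective f hf).trans ((Equiv.setCongr h).trans (Equiv.ofInjective g hg).symm),
    fun a => by simp [Equiv.apply_ofInjective_symm]⟩

section rankF

variable {m : ℕ} (v : Fin m → ℝ)

theorem rankF_eq_card_toLex_le (i : Fin m) :
    rankF v i = #{j | toLex (v j, j) ≤ toLex (v i, i)} := by
  simp [rankF, Prod.Lex.toLex_le_toLex]

theorem rankF_injective : Injective (rankF v) := by
  have hkey : Injective fun j => toLex (v j, j) := fun _ _ h =>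
    congrArg Prod.snd (toLex.injective h)
  convert card_filter_le_injective hkey using 1
  exact funext (rankF_eq_card_toLex_le v)

theorem rankF_mem_Icc (i : Fin m) : rankF v i ∈ Icc 1 m := by
  refine mem_Icc.2 ⟨card_pos.2 ⟨i, by simp⟩, ?_⟩
  exact (card_filter_le _ _).trans (by simp)

theorem image_rankF : univ.image (rankF v) = Icc 1 m :=
  eq_of_subset_of_card_le (image_subset_iff.2 fun i _ => rankF_mem_Icc v i)
    (by simp [card_image_of_injective _ (rankF_injective v)])

theorem exists_perm_rankF_eq (v' : Fin m → ℝ) :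
    ∃ σ : Equiv.Perm (Fin m), ∀ i, rankF v' (σ i) = rankF v i := by
  refine Equiv.Perm.exists_comp_eq_of_range_eq (rankF_injective v) (rankF_injective v') ?_
  rw [← Fintype.coe_image_univ, ← Fintype.coe_image_univ, image_rankF, image_rankF]

end rankF

-- For empty `ι` the denominator is `0` and the quotient is the junk value `0`.
theorem continuous_div_sum_exp {X ι : Type*} [TopologicalSpace X] [Fintype ι] {f : X → ℝ}
    {g : X → ι → ℝ} (hf : Continuous f) (hg : Continuous g) :
    Continuous fun x => f x / ∑ i, Real.exp (g x i) := by
  rcases isEmpty_or_nonempty ι with hι | hι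
  · simpa using continuous_const
  · exact hf.div (by fun_prop) fun x => (sum_pos (fun i _ => Real.exp_pos _) univ_nonempty).ne'

namespace SensitivityModel

variable {ι : Type*} {κ : ι → Type*}

def relabel (σ : ∀ s, Equiv.Perm (κ s)) (α : Type*) : (∀ s, κ s → α) ≃ (∀ s, κ s → α) :=
  Equiv.piCongrRight fun s => (σ s).arrowCongr (Equiv.refl α)

@[simp]
theorem relabel_apply (σ : ∀ s, Equiv.Perm (κ s)) {α : Type*} (f : ∀ s, κ s → α) (s : ι)
    (i : κ s) : relabel σ α f s i = f s ((σ s).symm i) :=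
  rfl

noncomputable def rankScores {n : ι → ℕ} (φ : ι → ℕ → ℝ) (v : ∀ s, Fin (n s) → ℝ) :
    ∀ s, Fin (n s) → ℝ :=
  fun s i => φ s (rankF (v s) i)

theorem exists_rankScores_eq_relabel {n : ι → ℕ} (φ : ι → ℕ → ℝ) (v v' : ∀ s, Fin (n s) → ℝ) :
    ∃ σ : ∀ s, Equiv.Perm (Fin (n s)), rankScores φ v' = relabel σ ℝ (rankScores φ v) := by
  choose σ hσ using fun s => exists_perm_rankF_eq (v s) (v' s)
  refine ⟨σ, funext fun s => funext fun i => ?_⟩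
  simp [rankScores, ← hσ]

variable [Fintype ι] [∀ s, Fintype (κ s)]

noncomputable def weight (γ : ℝ) (u : ∀ s, κ s → ℝ) (a : ∀ s, κ s → Bool) : ℝ :=
  ∏ s, Real.exp (γ * ∑ i, if a s i then u s i else 0) / ∑ i, Real.exp (γ * u s i)

def scoreStat (a : ∀ s, κ s → Bool) (r : ∀ s, κ s → ℝ) : ℝ :=
  ∑ s, ∑ i, if a s i then r s i else 0

theorem continuous_weight (γ : ℝ) (a : ∀ s, κ s → Bool) :
    Continuous fun u => weight (κ := κ) γ u a := by
  have hite : ∀ s i, Continuous fun u : ∀ s, κ s → ℝ => if a s i then u s i else 0 :=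
    fun s i => by split <;> fun_prop
  exact continuous_finsetProd _ fun s _ => continuous_div_sum_exp (by fun_prop) (by fun_prop)

variable (σ : ∀ s, Equiv.Perm (κ s))

omit [Fintype ι] in
theorem sum_relabel_ite {M : Type*} [AddCommMonoid M] (a : ∀ s, κ s → Bool) (f : ∀ s, κ s → M)
    (s : ι) : (∑ i, if relabel σ Bool a s i then relabel σ M f s i else 0) =
      ∑ i, if a s i then f s i else 0 :=
  Equiv.sum_comp (σ s).symm fun i => if a s i then f s i else 0

theorem weight_relabel (γ : ℝ) (u : ∀ s, κ s → ℝ) (a : ∀ s, κ s → Bool) :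
    weight γ (relabel σ ℝ u) (relabel σ Bool a) = weight γ u a := by
  refine prod_congr rfl fun s _ => ?_
  rw [sum_relabel_ite]
  congr 1
  exact Equiv.sum_comp (σ s).symm fun i => Real.exp (γ * u s i)

theorem scoreStat_relabel (a : ∀ s, κ s → Bool) (r : ∀ s, κ s → ℝ) :
    scoreStat (relabel σ Bool a) (relabel σ ℝ r) = scoreStat a r :=
  sum_congr rfl fun s _ => sum_relabel_ite σ a r s

variable [DecidableEq ι] [∀ s, DecidableEq (κ s)]

variable (κ) in
def assignments : Finset (∀ s, κ s → Bool) :=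
  univ.filter fun a => ∀ s, (univ.filter fun i => a s i = true).card = 1

noncomputable def tailProb (γ c : ℝ) (u r : ∀ s, κ s → ℝ) : ℝ :=
  ∑ a ∈ assignments κ, weight γ u a * if c ≤ scoreStat a r then 1 else 0

theorem relabel_mem_assignments {a : ∀ s, κ s → Bool} :
    relabel σ Bool a ∈ assignments κ ↔ a ∈ assignments κ := by
  have hcard : ∀ s, #{i | relabel σ Bool a s i = true} = #{i | a s i = true} := fun s =>
    card_equiv (σ s).symm fun i => by rw [mem_filter_univ, mem_filter_univ, relabel_apply]
  simp only [assignments, mem_filter, mem_univ, true_and, hcard]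

theorem tailProb_relabel (γ c : ℝ) (u r : ∀ s, κ s → ℝ) :
    tailProb γ c (relabel σ ℝ u) (relabel σ ℝ r) = tailProb γ c u r := by
  refine (sum_equiv (relabel σ Bool) (fun _ => (relabel_mem_assignments σ).symm) fun a _ => ?_).symm
  rw [weight_relabel, scoreStat_relabel]

theorem continuous_tailProb (γ c : ℝ) (r : ∀ s, κ s → ℝ) :
    Continuous fun u => tailProb γ c u r :=
  continuous_finsetSum _ fun a _ => (continuous_weight γ a).mul continuous_const

end SensitivityModel

theorem IsCompact.setOf_forall_forall_mem {ι X : Type*} {κ : ι → Type*} [TopologicalSpace X]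
    {K : Set X} (hK : IsCompact K) : IsCompact {u : ∀ s, κ s → X | ∀ s i, u s i ∈ K} := by
  convert isCompact_univ_pi fun s => isCompact_univ_pi fun (_ : κ s) => hK
  ext; simp [Set.mem_pi]

open SensitivityModel in
theorem stmt5_general (S : ℕ) (n : Fin S → ℕ)
    (γ : ℝ) (φ : Fin S → ℕ → ℝ)
    (c : ℝ) (y y' : ∀ s, Fin (n s) → ℝ) :
    -- the set of assignments with exactly one treated unit per matched set
    let A : Finset (∀ s, Fin (n s) → Bool) :=
      Finset.univ.filter fun a => ∀ s, (Finset.univ.filter fun i => a s i = true).card = 1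
    -- sensitivity-model weight of an assignment
    let w : (∀ s, Fin (n s) → ℝ) → (∀ s, Fin (n s) → Bool) → ℝ := fun u a =>
      ∏ s, (Real.exp (γ * ∑ i, if a s i then u s i else 0)) /
        (∑ i, Real.exp (γ * u s i))
    -- stratified rank score statistic
    let t : (∀ s, Fin (n s) → Bool) → (∀ s, Fin (n s) → ℝ) → ℝ := fun a v =>
      ∑ s, ∑ i, if a s i then φ s (rankF (v s) i) else 0
    -- tail probability of the statistic at c, under confounding u and outcomes v
    let tail : (∀ s, Fin (n s) → ℝ) → (∀ s, Fin (n s) → ℝ) → ℝ := fun u v =>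
      ∑ a ∈ A, w u a * (if c ≤ t a v then 1 else 0)
    let U : Set (∀ s, Fin (n s) → ℝ) := {u | ∀ s i, u s i ∈ Set.Icc (0 : ℝ) 1}
    (sSup ((fun u => tail u y) '' U) = sSup ((fun u => tail u y') '' U)) ∧
    ∃ u ∈ U, tail u y = sSup ((fun u => tail u y) '' U) := by
  intro A w t tail U
  -- not `rfl`: the two sides decide `∀ s, …` by different instances
  have hA : A = assignments _ := by
    ext; simp [A, assignments]
  have htail : ∀ u v, tail u v = tailProb γ c u (rankScores φ v) := by
    intro u v; unfold tail; rw [hA]; rfl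
  simp only [htail]
  have himage : ∀ v v',
      (tailProb γ c · (rankScores φ v)) '' U ⊆ (tailProb γ c · (rankScores φ v')) '' U := by
    rintro v v' _ ⟨u, hu, rfl⟩
    obtain ⟨σ, hσ⟩ := exists_rankScores_eq_relabel φ v v'
    exact ⟨relabel σ ℝ u, fun s i => hu s _, by rw [hσ]; exact tailProb_relabel σ γ c u _⟩
  refine ⟨by rw [(himage y y').antisymm (himage y' y)], ?_⟩
  obtain ⟨u, hu, hmax⟩ := isCompact_Icc.setOf_forall_forall_mem.exists_sSup_image_eq
    ⟨0, fun s i => ⟨le_rfl, zero_le_one⟩⟩ (continuous_tailProb γ c (rankScores φ y)).continuousOn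
  exact ⟨u, hu, hmax.symm⟩

/-- The worst-case tail probability of the stratified rank score statistic under the
sensitivity model with bias at most `Γ = exp γ` does not depend on the outcome vector
used to compute the ranks, and the worst case is attained at some `u ∈ [0,1]^N`. -/
theorem stmt5 (S : ℕ) (hS : 1 ≤ S) (n : Fin S → ℕ) (hn : ∀ s, 1 ≤ n s)
    (γ : ℝ) (hγ : 0 ≤ γ) (φ : Fin S → ℕ → ℝ)
    (hφ : ∀ s, ∀ a b : ℕ, 1 ≤ a → a ≤ b → b ≤ n s → φ s a ≤ φ s b)
    (c : ℝ) (y y' : ∀ s, Fin (n s) → ℝ) :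
    -- the set of assignments with exactly one treated unit per matched set
    let A : Finset (∀ s, Fin (n s) → Bool) :=
      Finset.univ.filter fun a => ∀ s, (Finset.univ.filter fun i => a s i = true).card = 1
    -- sensitivity-model weight of an assignment
    let w : (∀ s, Fin (n s) → ℝ) → (∀ s, Fin (n s) → Bool) → ℝ := fun u a =>
      ∏ s, (Real.exp (γ * ∑ i, if a s i then u s i else 0)) /
        (∑ i, Real.exp (γ * u s i))
    -- stratified rank score statistic
    let t : (∀ s, Fin (n s) → Bool) → (∀ s, Fin (n s) → ℝ) → ℝ := fun a v =>
      ∑ s, ∑ i, if a s i then φ s (rankF (v s) i) else 0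
    -- tail probability of the statistic at c, under confounding u and outcomes v
    let tail : (∀ s, Fin (n s) → ℝ) → (∀ s, Fin (n s) → ℝ) → ℝ := fun u v =>
      ∑ a ∈ A, w u a * (if c ≤ t a v then 1 else 0)
    let U : Set (∀ s, Fin (n s) → ℝ) := {u | ∀ s i, u s i ∈ Set.Icc (0 : ℝ) 1}
    (sSup ((fun u => tail u y) '' U) = sSup ((fun u => tail u y') '' U)) ∧
    ∃ u ∈ U, tail u y = sSup ((fun u => tail u y) '' U) :=
  stmt5_general S n γ φ c y y'
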